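/- arXiv:2604.04785 — 4 statements merged into one kernel-verified Lean document; each statement's English description precedes it below -/
import Mathlib

section
/- For every integer k ≥ 1, every integer m ≥ k, and every nonnegative integer N, the truncated inclusion–exclusion sum satisfies |1{N ≥ k} − ∑_{s=k}^{m} (-1)^{s-k} C(s-1, k-1) C(N, s)| ≤ C(m, k-1) C(N, m+1). -/
/-!
Write `k = a + 1`, `m = a + 1 + b`, and let `error a b N` be the truncation error multiplied by
`(-1) ^ (b + 1)`. It vanishes at `N = 0`, equals `C(n, b + 1)` at `a = 0`, `N = n + 1` (a partial
alternating sum of binomial coefficients), and Pascal's rule in both binomials of the sum gives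
`error (a + 1) b (n + 1) = error a b n + C(a + 1 + b, a + 1) C(n, a + 2 + b)`. Induction on `a`
shows that `error ≥ 0`, so it is the absolute error, and, with Pascal's rule once more and
`C(n, j) ≤ C(n + 1, j + 1)`, that `error a b N ≤ C(a + 1 + b, a) C(N, a + 2 + b)`.
-/

open Finset

lemma Nat.choose_le_succ_succ (n k : ℕ) : n.choose k ≤ (n + 1).choose (k + 1) :=
  Nat.choose_succ_succ' n k ▸ Nat.le_add_right _ _

namespace Bonferroni

/-- The sum of the theorem for `k = a + 1` and `m = a + 1 + b`, reindexed by `s = a + 1 + t`. -/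
def truncSum (a b N : ℕ) : ℤ :=
  ∑ t ∈ range (b + 1), (-1) ^ t * ((a + t).choose a : ℤ) * (N.choose (a + 1 + t) : ℤ)

def error (a b N : ℕ) : ℤ :=
  (-1) ^ (b + 1) * ((if a + 1 ≤ N then 1 else 0) - truncSum a b N)

lemma truncSum_zero_right (a b : ℕ) : truncSum a b 0 = 0 :=
  sum_eq_zero fun t _ => by simp [Nat.choose_eq_zero_of_lt (by omega : 0 < a + 1 + t)]

lemma truncSum_succ_succ (a b n : ℕ) :
    truncSum (a + 1) b (n + 1) = truncSum a b n
      + (-1) ^ b * ((a + 1 + b).choose (a + 1) : ℤ) * (n.choose (a + 2 + b) : ℤ) := by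
  induction b with
  | zero =>
    simp [truncSum, Nat.choose_succ_succ' n (a + 1)]
  | succ b ih =>
    simp only [truncSum] at ih ⊢
    rw [sum_range_succ, sum_range_succ _ (b + 1), ih]
    rw [show a + 1 + 1 + (b + 1) = a + b + 2 + 1 by omega, Nat.choose_succ_succ' n,
      show a + 1 + (b + 1) = a + b + 1 + 1 by omega, Nat.choose_succ_succ' (a + b + 1) a,
      show a + 2 + b = a + b + 2 by omega, show a + b + 1 + 1 = a + b + 2 by omega,
      show a + (b + 1) = a + b + 1 by omega, show a + 1 + b = a + b + 1 by omega]
    push_cast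
    ring

lemma error_zero_right (a b : ℕ) : error a b 0 = 0 := by
  simp [error, truncSum_zero_right]

lemma error_zero_succ (b n : ℕ) : error 0 b (n + 1) = n.choose (b + 1) := by
  have halt := Int.alternating_sum_range_choose_eq_choose (n := n) (m := b + 1)
  rw [sum_range_succ', pow_zero, Nat.choose_zero_right, Nat.cast_one, one_mul] at halt
  have htrunc : truncSum 0 b (n + 1)
      = -∑ t ∈ range (b + 1), (-1) ^ (t + 1) * ((n + 1).choose (t + 1) : ℤ) := by
    simp only [truncSum, ← sum_neg_distrib]
    refine sum_congr rfl fun t _ => ?_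
    simp [pow_succ, add_comm]
  rw [error, htrunc, if_pos (Nat.le_add_left 1 n)]
  linear_combination (-1) ^ (b + 1) * halt
    + (n.choose (b + 1) : ℤ) * pow_mul_pow_eq_one (b + 1) (by norm_num : (-1 : ℤ) * -1 = 1)

lemma error_succ_succ (a b n : ℕ) :
    error (a + 1) b (n + 1)
      = error a b n + ((a + 1 + b).choose (a + 1) : ℤ) * (n.choose (a + 2 + b) : ℤ) := by
  simp only [error, truncSum_succ_succ, add_le_add_iff_right]
  linear_combination ((a + 1 + b).choose (a + 1) : ℤ) * (n.choose (a + 2 + b) : ℤ)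
    * pow_mul_pow_eq_one b (by norm_num : (-1 : ℤ) * -1 = 1)

lemma error_nonneg (a b N : ℕ) : 0 ≤ error a b N := by
  induction a generalizing N with
  | zero =>
    cases N with
    | zero => rw [error_zero_right]
    | succ n => rw [error_zero_succ]; positivity
  | succ a ih =>
    cases N with
    | zero => rw [error_zero_right]
    | succ n => rw [error_succ_succ]; exact add_nonneg (ih n) (by positivity)

lemma error_le (a b N : ℕ) :
    error a b N ≤ ((a + 1 + b).choose a : ℤ) * (N.choose (a + 2 + b) : ℤ) := by
  induction a generalizing N with
  | zero =>
    cases N with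
    | zero => rw [error_zero_right]; positivity
    | succ n =>
      rw [error_zero_succ, Nat.choose_zero_right, Nat.cast_one, one_mul]
      exact_mod_cast (add_comm 2 b ▸ Nat.choose_le_succ_succ n (b + 1))
  | succ a ih =>
    cases N with
    | zero => rw [error_zero_right]; positivity
    | succ n =>
      calc error (a + 1) b (n + 1)
          = error a b n + ((a + 1 + b).choose (a + 1) : ℤ) * (n.choose (a + 2 + b) : ℤ) :=
            error_succ_succ a b n
        _ ≤ ((a + 1 + b).choose a + (a + 1 + b).choose (a + 1) : ℤ) * n.choose (a + 2 + b) := by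
            linarith [ih n]
        _ = ((a + 1 + 1 + b).choose (a + 1) : ℤ) * n.choose (a + 2 + b) := by
            rw [show a + 1 + 1 + b = a + 1 + b + 1 by omega, Nat.choose_succ_succ']
            push_cast; ring
        _ ≤ ((a + 1 + 1 + b).choose (a + 1) : ℤ) * (n + 1).choose (a + 1 + 2 + b) := by
            gcongr
            exact_mod_cast (show a + 1 + 2 + b = a + 2 + b + 1 by omega) ▸
              Nat.choose_le_succ_succ n (a + 2 + b)

lemma abs_indicator_sub_truncSum (a b N : ℕ) :
    |(if a + 1 ≤ N then 1 else 0) - truncSum a b N| = error a b N := by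
  rw [← abs_of_nonneg (error_nonneg a b N), error, abs_mul, abs_neg_one_pow, one_mul]

lemma sum_Icc_eq_truncSum (a b N : ℕ) :
    ∑ s ∈ Icc (a + 1) (a + 1 + b),
        (-1 : ℤ) ^ (s - (a + 1)) * ((s - 1).choose a : ℤ) * (N.choose s : ℤ)
      = truncSum a b N := by
  rw [← Ico_add_one_right_eq_Icc, sum_Ico_eq_sum_range,
    show a + 1 + b + 1 - (a + 1) = b + 1 by omega]
  refine sum_congr rfl fun t _ => ?_
  rw [show a + 1 + t - (a + 1) = t by omega, show a + 1 + t - 1 = a + t by omega]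

end Bonferroni

open Bonferroni in
/-- Generalized Bonferroni truncation bound: for `k ≥ 1`, `m ≥ k` and every
nonnegative integer `N`,
`|1{N ≥ k} − ∑_{s=k}^{m} (-1)^{s-k} C(s-1,k-1) C(N,s)| ≤ C(m,k-1) C(N,m+1)`. -/
theorem stmt_1 (k m : ℕ) (hk : 1 ≤ k) (hm : k ≤ m) (N : ℕ) :
    |(if k ≤ N then (1 : ℤ) else 0)
        - ∑ s ∈ Finset.Icc k m,
            (-1 : ℤ) ^ (s - k) * ((s - 1).choose (k - 1) : ℤ) * (N.choose s : ℤ)|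
      ≤ (m.choose (k - 1) : ℤ) * (N.choose (m + 1) : ℤ) := by
  obtain ⟨a, rfl⟩ : ∃ a, k = a + 1 := ⟨k - 1, by omega⟩
  obtain ⟨b, rfl⟩ : ∃ b, m = a + 1 + b := ⟨m - (a + 1), by omega⟩
  rw [Nat.add_sub_cancel, sum_Icc_eq_truncSum, abs_indicator_sub_truncSum,
    show a + 1 + b + 1 = a + 2 + b by omega]
  exact error_le a b N
end

section
/- Let p_1, …, p_d ∈ [0,1], let λ = ∑_{j=1}^d p_j, and let e_s = ∑_{|I|=s} ∏_{j∈I} p_j be the s-th elementary symmetric polynomial of p_1,…,p_d. Then for every integer s ≥ 2 there exists a constant C_s depending only on s such that |λ^s / s! − e_s| ≤ C_s λ^{s-2} ∑_{j=1}^d p_j². -/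
/-!
Expanding `λ^s = ∑_{f : Fin s → ι} ∏_k p (f k)`, the injective `f` contribute exactly
`s! e_s`, since each `s`-subset is the image of `s!` of them. Every other `f` has `f a = f b`
for some `a ≠ b`, and for a fixed pair the sum over such `f` equals `(∑ p_j²) λ^(s-2)`.
Hence `0 ≤ λ^s/s! - e_s ≤ (s(s-1)/s!) λ^(s-2) ∑ p_j²`.
-/

open Finset Function
open scoped Nat

section

variable {ι κ R : Type*} [Fintype ι] [DecidableEq ι] [Fintype κ] [DecidableEq κ]

noncomputable def injectiveImageEquiv {s : ℕ} (I : Finset ι) :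
    {f : Fin s → ι // Injective f ∧ univ.image f = I} ≃ (Fin s ≃ I) where
  toFun f := Equiv.ofBijective
    (fun k => ⟨f.1 k, f.2.2.subset (mem_image_of_mem _ (mem_univ k))⟩)
    ⟨fun _ _ h => f.2.1 (congrArg Subtype.val h), fun ⟨j, hj⟩ => by
      rw [← f.2.2] at hj
      obtain ⟨k, -, rfl⟩ := mem_image.1 hj
      exact ⟨k, rfl⟩⟩
  invFun e := ⟨fun k => e k, Subtype.val_injective.comp e.injective, by
    ext j
    simp only [mem_image, mem_univ, true_and]
    exact ⟨by rintro ⟨k, rfl⟩; exact (e k).2,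
      fun hj => ⟨e.symm ⟨j, hj⟩, by simp⟩⟩⟩
  left_inv _ := rfl
  right_inv _ := by ext; rfl

theorem card_injective_image_eq_factorial {s : ℕ} {I : Finset ι} (hI : #I = s) :
    #{f : Fin s → ι | Injective f ∧ univ.image f = I} = s ! := by
  rw [← Fintype.card_subtype, Fintype.card_congr (injectiveImageEquiv I),
    Fintype.card_equiv (I.equivFinOfCardEq hI).symm, Fintype.card_fin]

theorem sum_injective_prod_eq_factorial_mul [CommSemiring R] (s : ℕ) (p : ι → R) :
    ∑ f : Fin s → ι with Injective f, ∏ k, p (f k) =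
      s ! * ∑ I ∈ powersetCard s univ, ∏ j ∈ I, p j := by
  have maps : ∀ f ∈ ({f : Fin s → ι | Injective f} : Finset _),
      univ.image f ∈ powersetCard s univ := fun f hf => by
    simp [card_image_of_injective _ (mem_filter.1 hf).2]
  rw [← sum_fiberwise_of_maps_to maps, mul_sum]
  refine sum_congr rfl fun I hI => ?_
  have prod_eq : ∀ f ∈ ({f : Fin s → ι | Injective f} : Finset _).filter (univ.image · = I),
      ∏ k, p (f k) = ∏ j ∈ I, p j := fun f hf => by
    obtain ⟨⟨-, hinj⟩, rfl⟩ := mem_filter.1 hf |>.imp_left mem_filter.1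
    rw [prod_image hinj.injOn]
  rw [sum_congr rfl prod_eq, sum_const, filter_filter,
    card_injective_image_eq_factorial (mem_powersetCard_univ.1 hI), nsmul_eq_mul]

theorem sum_pow_eq_factorial_mul_add_sum_not_injective [CommSemiring R] (p : ι → R) (s : ℕ) :
    (∑ j, p j) ^ s = s ! * ∑ I ∈ powersetCard s univ, ∏ j ∈ I, p j +
      ∑ f : Fin s → ι with ¬Injective f, ∏ k, p (f k) := by
  rw [Fintype.sum_pow, ← sum_filter_add_sum_filter_not univ Injective,
    sum_injective_prod_eq_factorial_mul]

theorem sum_prod_of_apply_eq_apply [CommSemiring R] (p : ι → R) {a b : κ} (hab : a ≠ b) :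
    ∑ f : κ → ι with f a = f b, ∏ k, p (f k) =
      (∑ j, p j ^ 2) * (∑ j, p j) ^ (Fintype.card κ - 2) := by
  -- `[f a = f b] = ∑ j, [f a = j] [f b = j]`, and each summand is a product over `k`
  set w : ι → κ → ι → R := fun j k x => if k = a ∨ k = b → x = j then p x else 0
  have indicator_eq : ∀ f : κ → ι,
      (if f a = f b then ∏ k, p (f k) else 0) = ∑ j, ∏ k, w j k (f k) := fun f => by
    simp only [w, Fintype.prod_ite_zero, forall_eq_or_imp, forall_eq, ite_and]
    rw [sum_ite_eq]
    simp [eq_comm]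
  have row_sum (j : ι) (k : κ) :
      ∑ x, w j k x = if k = a ∨ k = b then p j else ∑ x, p x := by
    by_cases hk : k = a ∨ k = b <;> simp [w, hk]
  have card_pair : #({k | k = a ∨ k = b} : Finset κ) = 2 := by
    rw [← card_pair hab]; congr 1; ext; simp
  have card_compl_pair : #({k | ¬(k = a ∨ k = b)} : Finset κ) = Fintype.card κ - 2 := by
    have h := card_filter_add_card_filter_not (s := univ) (fun k : κ => k = a ∨ k = b)
    rw [card_pair, card_univ] at h
    omega
  calc ∑ f : κ → ι with f a = f b, ∏ k, p (f k)
      = ∑ j, ∑ f : κ → ι, ∏ k, w j k (f k) := by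
        rw [sum_filter, sum_comm]; exact sum_congr rfl fun f _ => indicator_eq f
    _ = ∑ j, p j ^ 2 * (∑ j, p j) ^ (Fintype.card κ - 2) := by
        refine sum_congr rfl fun j _ => ?_
        rw [← Fintype.prod_sum, Fintype.prod_congr _ _ (row_sum j), prod_ite, prod_const,
          prod_const, card_pair, card_compl_pair]
    _ = _ := by rw [sum_mul]

theorem sum_not_injective_prod_le [CommSemiring R] [PartialOrder R] [IsOrderedRing R]
    (p : ι → R) (hp : ∀ j, 0 ≤ p j) :
    ∑ f : κ → ι with ¬Injective f, ∏ k, p (f k) ≤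
      #(univ : Finset κ).offDiag * ((∑ j, p j ^ 2) * (∑ j, p j) ^ (Fintype.card κ - 2)) := by
  have prod_nonneg (f : κ → ι) : 0 ≤ ∏ k, p (f k) := prod_nonneg fun k _ => hp (f k)
  have le_sum_pairs (f : κ → ι) (hf : ¬Injective f) : ∏ k, p (f k) ≤
      ∑ q ∈ (univ : Finset κ).offDiag, if f q.1 = f q.2 then ∏ k, p (f k) else 0 := by
    obtain ⟨a, b, hfab, hab⟩ := not_injective_iff.1 hf
    have hmem : (a, b) ∈ (univ : Finset κ).offDiag :=
      mem_offDiag.2 ⟨mem_univ a, mem_univ b, hab⟩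
    have h := single_le_sum (f := fun q : κ × κ => if f q.1 = f q.2 then ∏ k, p (f k) else 0)
      (fun _ _ => ite_nonneg (prod_nonneg f) le_rfl) hmem
    rwa [if_pos hfab] at h
  calc ∑ f : κ → ι with ¬Injective f, ∏ k, p (f k)
      ≤ ∑ f : κ → ι with ¬Injective f,
          ∑ q ∈ (univ : Finset κ).offDiag, if f q.1 = f q.2 then ∏ k, p (f k) else 0 :=
        sum_le_sum fun f hf => le_sum_pairs f (mem_filter.1 hf).2
    _ ≤ ∑ f : κ → ι,
          ∑ q ∈ (univ : Finset κ).offDiag, if f q.1 = f q.2 then ∏ k, p (f k) else 0 :=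
        sum_le_sum_of_subset_of_nonneg (filter_subset _ _) fun f _ _ =>
          sum_nonneg fun _ _ => ite_nonneg (prod_nonneg f) le_rfl
    _ = ∑ _q ∈ (univ : Finset κ).offDiag,
          (∑ j, p j ^ 2) * (∑ j, p j) ^ (Fintype.card κ - 2) := by
        rw [sum_comm]
        refine sum_congr rfl fun q hq => ?_
        rw [← sum_filter, sum_prod_of_apply_eq_apply p (mem_offDiag.1 hq).2.2]
    _ = _ := by rw [sum_const, nsmul_eq_mul]

end

/-- Comparison of `λ^s/s!` with the `s`-th elementary symmetric polynomial:
for every `s ≥ 2` there is `C_s > 0` such that for all `d` and all `p_j ∈ [0,1]`,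
`|λ^s/s! − e_s| ≤ C_s λ^{s-2} ∑_j p_j²`, where `λ = ∑_j p_j`. -/
theorem stmt_5 (s : ℕ) (hs : 2 ≤ s) :
    ∃ C : ℝ, 0 < C ∧ ∀ (d : ℕ) (p : Fin d → ℝ), (∀ j, 0 ≤ p j ∧ p j ≤ 1) →
      |(∑ j, p j) ^ s / (s.factorial : ℝ)
          - ∑ I ∈ Finset.powersetCard s (Finset.univ : Finset (Fin d)), ∏ j ∈ I, p j|
        ≤ C * (∑ j, p j) ^ (s - 2) * ∑ j, (p j) ^ 2 := by
  have offDiag_pos : 0 < #(univ : Finset (Fin s)).offDiag :=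
    card_pos.2 ⟨(⟨0, by omega⟩, ⟨1, by omega⟩), by simp⟩
  refine ⟨#(univ : Finset (Fin s)).offDiag / s !, by positivity, fun d p hp => ?_⟩
  have hp₀ (j : Fin d) : 0 ≤ p j := (hp j).1
  have bound := sum_not_injective_prod_le p hp₀ (κ := Fin s)
  rw [Fintype.card_fin] at bound
  have remainder_nonneg : 0 ≤ ∑ f : Fin s → Fin d with ¬Injective f, ∏ k, p (f k) :=
    sum_nonneg fun f _ => prod_nonneg fun k _ => hp₀ (f k)
  rw [sum_pow_eq_factorial_mul_add_sum_not_injective p s, add_div,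
    mul_div_cancel_left₀ _ (by positivity), add_sub_cancel_left,
    abs_of_nonneg (div_nonneg remainder_nonneg (by positivity))]
  calc _ ≤ #(univ : Finset (Fin s)).offDiag * ((∑ j, p j ^ 2) * (∑ j, p j) ^ (s - 2)) / s ! :=
        div_le_div_of_nonneg_right bound (by positivity)
    _ = _ := by ring
end

section
/- Let (Z_1, …, Z_m) be a centered Gaussian vector with Var(Z_r) = σ² for all r and with all pairwise correlations at most ϑ_* < 1. Then for every t > 0, P(Z_r > t for all r = 1,…,m) ≤ Φ̄( sqrt(m / (1 + (m−1)ϑ_*)) · t/σ ), where Φ̄ is the standard normal survival function. Moreover, by Mills' ratio this is at most (σ √(1+(m−1)ϑ_*) / (√(2πm) t)) exp( −m t² / (2σ²(1+(m−1)ϑ_*)) ). -/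
/-!
The event `{Z_r > t for all r}` lies inside `{∑ Z_r > m t}`. The sum is a centered Gaussian whose
variance, expanded into the entries of the covariance matrix, is at most `m σ² (1 + (m - 1) ϑ)`,
so its tail at `m t` is at most `Φ̄(√(m / (1 + (m - 1) ϑ)) t / σ)`. Mills' ratio comes from
`∫_u^∞ e^{-x²/2} dx ≤ ∫_u^∞ (x / u) e^{-x²/2} dx = e^{-u²/2} / u`.
-/

open MeasureTheory ProbabilityTheory

/-- The standard Gaussian survival function `Φ̄(u) = P(N(0,1) > u)`. -/
noncomputable def stdGaussianSurvival (u : ℝ) : ℝ :=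
  ((gaussianReal 0 1) (Set.Ioi u)).toReal

open Real Set Filter
open scoped NNReal

lemma integrable_exp_neg_sq_div_two : Integrable fun x : ℝ ↦ exp (-x ^ 2 / 2) := by
  simpa [neg_div, div_eq_inv_mul] using integrable_exp_neg_mul_sq (one_half_pos (α := ℝ))

lemma integrable_mul_exp_neg_sq_div_two : Integrable fun x : ℝ ↦ x * exp (-x ^ 2 / 2) := by
  simpa [neg_div, div_eq_inv_mul] using integrable_mul_exp_neg_mul_sq (one_half_pos (α := ℝ))

lemma integral_Ioi_mul_exp_neg_sq_div_two (u : ℝ) :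
    ∫ x in Ioi u, x * exp (-x ^ 2 / 2) = exp (-u ^ 2 / 2) := by
  have hderiv : ∀ x ∈ Ici u,
      HasDerivAt (fun y ↦ -exp (-y ^ 2 / 2)) (x * exp (-x ^ 2 / 2)) x := by
    intro x _
    have h : HasDerivAt (fun y : ℝ ↦ -y ^ 2 / 2) (-(2 * x) / 2) x := by
      simpa using (hasDerivAt_pow 2 x).neg.div_const 2
    exact h.exp.neg.congr_deriv (by ring)
  have hlim : Tendsto (fun x : ℝ ↦ -exp (-x ^ 2 / 2)) atTop (nhds 0) := by
    have h : Tendsto (fun x : ℝ ↦ -x ^ 2 / 2) atTop atBot :=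
      tendsto_neg_atTop_atBot.comp ((tendsto_pow_atTop two_ne_zero).atTop_div_const two_pos)
        |>.congr fun x ↦ by simp [neg_div]
    simpa using (tendsto_exp_atBot.comp h).neg
  rw [integral_Ioi_of_hasDerivAt_of_tendsto' hderiv
    integrable_mul_exp_neg_sq_div_two.integrableOn hlim]
  ring

lemma stdGaussianSurvival_eq_integral (u : ℝ) :
    stdGaussianSurvival u = (√(2 * π))⁻¹ * ∫ x in Ioi u, exp (-x ^ 2 / 2) := by
  rw [stdGaussianSurvival, gaussianReal_apply_eq_integral 0 one_ne_zero,
    ENNReal.toReal_ofReal (integral_nonneg fun x ↦ gaussianPDFReal_nonneg 0 1 x),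
    ← integral_const_mul]
  simp [gaussianPDFReal]

lemma stdGaussianSurvival_nonneg (u : ℝ) : 0 ≤ stdGaussianSurvival u :=
  ENNReal.toReal_nonneg

lemma stdGaussianSurvival_antitone : Antitone stdGaussianSurvival := fun _ _ h ↦
  ENNReal.toReal_mono (measure_ne_top _ _) (measure_mono (Ioi_subset_Ioi h))

theorem stdGaussianSurvival_le_exp_div {u : ℝ} (hu : 0 < u) :
    stdGaussianSurvival u ≤ exp (-u ^ 2 / 2) / (√(2 * π) * u) := by
  have hle :
      ∫ x in Ioi u, exp (-x ^ 2 / 2) ≤ ∫ x in Ioi u, u⁻¹ * (x * exp (-x ^ 2 / 2)) := by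
    refine setIntegral_mono_on integrable_exp_neg_sq_div_two.integrableOn
      (integrable_mul_exp_neg_sq_div_two.const_mul _).integrableOn measurableSet_Ioi
      fun x (hx : u < x) ↦ ?_
    rw [← mul_assoc, ← div_eq_inv_mul]
    exact le_mul_of_one_le_left (exp_pos _).le ((one_le_div hu).2 hx.le)
  rw [integral_const_mul, integral_Ioi_mul_exp_neg_sq_div_two] at hle
  calc stdGaussianSurvival u = (√(2 * π))⁻¹ * ∫ x in Ioi u, exp (-x ^ 2 / 2) :=
        stdGaussianSurvival_eq_integral u
    _ ≤ (√(2 * π))⁻¹ * (u⁻¹ * exp (-u ^ 2 / 2)) := by gcongr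
    _ = exp (-u ^ 2 / 2) / (√(2 * π) * u) := by field_simp

lemma stdGaussianSurvival_sqrt_div_mul_div_le {n θ σ t : ℝ} (hn : 0 < n) (hθ : 0 < θ)
    (hσ : 0 < σ) (ht : 0 < t) :
    stdGaussianSurvival (√(n / θ) * t / σ)
      ≤ σ * √θ / (√(2 * π * n) * t) * exp (-(n * t ^ 2) / (2 * σ ^ 2 * θ)) := by
  have hsq : (√(n / θ) * t / σ) ^ 2 = n * t ^ 2 / (σ ^ 2 * θ) := by
    rw [div_pow, mul_pow, sq_sqrt (by positivity)]
    field_simp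
  have hsqrt_n : 0 < √n := sqrt_pos.2 hn
  have hsqrt_θ : 0 < √θ := sqrt_pos.2 hθ
  have hsqrt_2π : 0 < √(2 * π) := sqrt_pos.2 (by positivity)
  refine (stdGaussianSurvival_le_exp_div (by positivity)).trans_eq ?_
  rw [hsq, sqrt_div hn.le, sqrt_mul (x := 2 * π) (by positivity)]
  field_simp

lemma gaussianReal_Ioi_toReal (a : ℝ) {v : ℝ≥0} (hv : v ≠ 0) :
    (gaussianReal 0 v (Ioi a)).toReal = stdGaussianSurvival (a / √v) := by
  have hsqrt : 0 < √(v : ℝ) := sqrt_pos.2 (by positivity)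
  have hmap : (gaussianReal 0 1).map (√(v : ℝ) * ·) = gaussianReal 0 v := by
    rw [gaussianReal_map_const_mul]
    simp [sq_sqrt v.coe_nonneg]
  have hpre : (√(v : ℝ) * ·) ⁻¹' Ioi a = Ioi (a / √v) := by
    ext x
    simp [div_lt_iff₀' hsqrt]
  rw [← hmap, Measure.map_apply (by fun_prop) measurableSet_Ioi, hpre, stdGaussianSurvival]

lemma gaussianReal_Ioi_toReal_le {a s : ℝ} (ha : 0 ≤ a) (hs : 0 < s) {v : ℝ≥0}
    (hv : (v : ℝ) ≤ s ^ 2) :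
    (gaussianReal 0 v (Ioi a)).toReal ≤ stdGaussianSurvival (a / s) := by
  rcases eq_or_ne v 0 with rfl | hv0
  · simp [gaussianReal_zero_var, Measure.dirac_apply' _ measurableSet_Ioi, not_lt.2 ha,
      stdGaussianSurvival_nonneg]
  rw [gaussianReal_Ioi_toReal a hv0]
  refine stdGaussianSurvival_antitone (div_le_div_of_nonneg_left ha (sqrt_pos.2 ?_) ?_)
  · positivity
  · exact (sqrt_le_sqrt hv).trans_eq (sqrt_sq hs.le)

lemma integral_sq_of_map_eq_gaussianReal {Ω : Type*} [MeasurableSpace Ω] {μ : Measure Ω}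
    {X : Ω → ℝ} (hX : AEMeasurable X μ) {v : ℝ≥0} (h : μ.map X = gaussianReal 0 v) :
    ∫ ω, X ω ^ 2 ∂μ = v := by
  rw [← integral_map (f := fun x ↦ x ^ 2) hX (by fun_prop), h,
    ← variance_of_integral_eq_zero aemeasurable_id' integral_id_gaussianReal,
    variance_fun_id_gaussianReal]

lemma memLp_two_of_map_eq_gaussianReal {Ω : Type*} [MeasurableSpace Ω] {μ : Measure Ω}
    {X : Ω → ℝ} (hX : AEMeasurable X μ) {v : ℝ≥0} (h : μ.map X = gaussianReal 0 v) :
    MemLp X 2 μ := by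
  have := memLp_id_gaussianReal' (μ := 0) (v := v) 2 ENNReal.ofNat_ne_top
  rw [← h, memLp_map_measure_iff aestronglyMeasurable_id hX] at this
  exact this

lemma integral_sq_sum_le {Ω ι : Type*} [MeasurableSpace Ω] {μ : Measure Ω} [Fintype ι]
    {X : ι → Ω → ℝ} (hX : ∀ i, MemLp (X i) 2 μ) {s c : ℝ}
    (hs : ∀ i, ∫ ω, X i ω ^ 2 ∂μ ≤ s)
    (hc : ∀ i j, i ≠ j → ∫ ω, X i ω * X j ω ∂μ ≤ c) :
    ∫ ω, (∑ i, X i ω) ^ 2 ∂μ ≤ Fintype.card ι * (s + (Fintype.card ι - 1) * c) := by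
  classical
  have hint : ∀ i j, Integrable (fun ω ↦ X i ω * X j ω) μ := fun i j ↦
    (hX i).integrable_mul (hX j)
  have hentry : ∀ i j, ∫ ω, X i ω * X j ω ∂μ ≤ c + if j = i then s - c else 0 := by
    intro i j
    split_ifs with hji
    · subst hji
      simpa [← sq] using hs j
    · simpa using hc i j (Ne.symm hji)
  calc ∫ ω, (∑ i, X i ω) ^ 2 ∂μ = ∑ i, ∑ j, ∫ ω, X i ω * X j ω ∂μ := by
        simp_rw [sq, Finset.sum_mul_sum]
        rw [integral_finsetSum _ fun i _ ↦ integrable_finsetSum _ fun j _ ↦ hint i j]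
        exact Finset.sum_congr rfl fun i _ ↦ integral_finsetSum _ fun j _ ↦ hint i j
    _ ≤ ∑ i : ι, ∑ j : ι, (c + if j = i then s - c else 0) := by
        gcongr with i _ j _
        exact hentry i j
    _ = Fintype.card ι * (s + (Fintype.card ι - 1) * c) := by
        simp [Finset.sum_add_distrib]
        ring

lemma measure_forall_lt_le_stdGaussianSurvival {Ω ι : Type*} [MeasurableSpace Ω]
    {μ : Measure Ω} [Fintype ι] [Nonempty ι] {X : ι → Ω → ℝ}
    (hX : AEMeasurable (fun ω ↦ ∑ i, X i ω) μ) {v : ℝ≥0}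
    (hlaw : μ.map (fun ω ↦ ∑ i, X i ω) = gaussianReal 0 v) {s t : ℝ} (hs : 0 < s)
    (hv : (v : ℝ) ≤ s ^ 2) (ht : 0 ≤ t) :
    (μ {ω | ∀ i, t < X i ω}).toReal ≤ stdGaussianSurvival (Fintype.card ι * t / s) := by
  have hsub :
      {ω | ∀ i, t < X i ω} ⊆ (fun ω ↦ ∑ i, X i ω) ⁻¹' Ioi (Fintype.card ι * t) := by
    intro ω hω
    simpa using Finset.sum_lt_sum_of_nonempty Finset.univ_nonempty fun i _ ↦ hω i
  have hsum : μ ((fun ω ↦ ∑ i, X i ω) ⁻¹' Ioi (Fintype.card ι * t))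
      = gaussianReal 0 v (Ioi (Fintype.card ι * t)) := by
    rw [← hlaw, Measure.map_apply_of_aemeasurable hX measurableSet_Ioi]
  calc (μ {ω | ∀ i, t < X i ω}).toReal
      ≤ (gaussianReal 0 v (Ioi (Fintype.card ι * t))).toReal := by
        rw [← hsum]
        exact ENNReal.toReal_mono (hsum ▸ measure_ne_top _ _) (measure_mono hsub)
    _ ≤ stdGaussianSurvival (Fintype.card ι * t / s) :=
        gaussianReal_Ioi_toReal_le (by positivity) hs hv

theorem stmt_11_general {Ω : Type*} [MeasureSpace Ω]
    {m : ℕ} (hm : 1 ≤ m) (Z : Fin m → Ω → ℝ) (hmeas : ∀ r, Measurable (Z r))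
    (σ ϑ : ℝ) (hσ : 0 < σ) (hϑ0 : 0 ≤ ϑ)
    (hGauss : ∀ c : Fin m → ℝ, ∃ v : NNReal,
      Measure.map (fun ω => ∑ r, c r * Z r ω) ℙ = gaussianReal 0 v)
    (hvar : ∀ r, ∫ ω, (Z r ω) ^ 2 ∂ℙ = σ ^ 2)
    (hcorr : ∀ r r' : Fin m, r ≠ r' → ∫ ω, Z r ω * Z r' ω ∂ℙ ≤ ϑ * σ ^ 2)
    (t : ℝ) (ht : 0 < t) :
    (ℙ {ω | ∀ r, t < Z r ω}).toReal
        ≤ stdGaussianSurvival (Real.sqrt ((m : ℝ) / (1 + ((m : ℝ) - 1) * ϑ)) * t / σ) ∧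
    stdGaussianSurvival (Real.sqrt ((m : ℝ) / (1 + ((m : ℝ) - 1) * ϑ)) * t / σ)
        ≤ σ * Real.sqrt (1 + ((m : ℝ) - 1) * ϑ) / (Real.sqrt (2 * Real.pi * (m : ℝ)) * t)
          * Real.exp (-((m : ℝ) * t ^ 2) / (2 * σ ^ 2 * (1 + ((m : ℝ) - 1) * ϑ))) := by
  set θ := 1 + ((m : ℝ) - 1) * ϑ
  have hm' : (1 : ℝ) ≤ m := by exact_mod_cast hm
  have hθ : 0 < θ := by
    have := mul_nonneg (sub_nonneg.2 hm') hϑ0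
    linarith
  have : Nonempty (Fin m) := ⟨⟨0, hm⟩⟩
  have hmarg : ∀ r, MemLp (Z r) 2 ℙ := fun r ↦ by
    obtain ⟨v, hv⟩ := hGauss (Pi.single r 1)
    simp only [Pi.single_apply, ite_mul, one_mul, zero_mul, Finset.sum_ite_eq',
      Finset.mem_univ, if_true] at hv
    exact memLp_two_of_map_eq_gaussianReal (hmeas r).aemeasurable hv
  obtain ⟨v, hv⟩ := hGauss 1
  simp only [Pi.one_apply, one_mul] at hv
  have hSmeas : AEMeasurable (fun ω ↦ ∑ r, Z r ω) ℙ := by fun_prop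
  have hvle : (v : ℝ) ≤ (σ * √(m * θ)) ^ 2 := by
    rw [← integral_sq_of_map_eq_gaussianReal hSmeas hv]
    calc ∫ ω, (∑ r, Z r ω) ^ 2 ≤ m * (σ ^ 2 + (m - 1) * (ϑ * σ ^ 2)) := by
          simpa using integral_sq_sum_le hmarg (fun r ↦ (hvar r).le) hcorr
      _ = (σ * √(m * θ)) ^ 2 := by
          rw [mul_pow, sq_sqrt (by positivity)]
          ring
  have hu : √(m / θ) * t / σ = Fintype.card (Fin m) * t / (σ * √(m * θ)) := by
    have hsqrt_m : 0 < √(m : ℝ) := sqrt_pos.2 (by positivity)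
    have hsqrt_θ : 0 < √θ := sqrt_pos.2 hθ
    rw [Fintype.card_fin, sqrt_div (by positivity), sqrt_mul (by positivity)]
    field_simp
    rw [sq_sqrt (by positivity)]
  refine ⟨?_, stdGaussianSurvival_sqrt_div_mul_div_le (by positivity) hθ hσ ht⟩
  rw [hu]
  exact measure_forall_lt_le_stdGaussianSurvival hSmeas hv (by positivity) hvle ht.le

/-- Gaussian cluster tail bound: if `(Z_1,…,Z_m)` is a centered Gaussian vector with
common variance `σ²` and all pairwise correlations at most `ϑ < 1`, then for `t > 0`,
`P(Z_r > t ∀r) ≤ Φ̄(√(m/(1+(m−1)ϑ)) t/σ)`, and by Mills' ratio the latter is at most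
`(σ√(1+(m−1)ϑ)/(√(2πm) t)) exp(−m t²/(2σ²(1+(m−1)ϑ)))`. -/
theorem stmt_11 {Ω : Type*} [MeasureSpace Ω] [IsProbabilityMeasure (ℙ : Measure Ω)]
    {m : ℕ} (hm : 1 ≤ m) (Z : Fin m → Ω → ℝ) (hmeas : ∀ r, Measurable (Z r))
    (σ ϑ : ℝ) (hσ : 0 < σ) (hϑ0 : 0 ≤ ϑ) (hϑ1 : ϑ < 1)
    (hGauss : ∀ c : Fin m → ℝ, ∃ v : NNReal,
      Measure.map (fun ω => ∑ r, c r * Z r ω) ℙ = gaussianReal 0 v)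
    (hcent : ∀ r, ∫ ω, Z r ω ∂ℙ = 0)
    (hvar : ∀ r, ∫ ω, (Z r ω) ^ 2 ∂ℙ = σ ^ 2)
    (hcorr : ∀ r r' : Fin m, r ≠ r' → ∫ ω, Z r ω * Z r' ω ∂ℙ ≤ ϑ * σ ^ 2)
    (t : ℝ) (ht : 0 < t) :
    (ℙ {ω | ∀ r, t < Z r ω}).toReal
        ≤ stdGaussianSurvival (Real.sqrt ((m : ℝ) / (1 + ((m : ℝ) - 1) * ϑ)) * t / σ) ∧
    stdGaussianSurvival (Real.sqrt ((m : ℝ) / (1 + ((m : ℝ) - 1) * ϑ)) * t / σ)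
        ≤ σ * Real.sqrt (1 + ((m : ℝ) - 1) * ϑ) / (Real.sqrt (2 * Real.pi * (m : ℝ)) * t)
          * Real.exp (-((m : ℝ) * t ^ 2) / (2 * σ ^ 2 * (1 + ((m : ℝ) - 1) * ϑ))) :=
  stmt_11_general hm Z hmeas σ ϑ hσ hϑ0 hGauss hvar hcorr t ht
end

section
/- Let A_1, …, A_s be events such that for every nonempty L ⊆ {1,…,s}, |P(⋂_{j∈L} A_j) − ∏_{j∈L} P(A_j)| ≤ (|L| − 1)·α for some α ≥ 0, and suppose P(A_j) = 1 − q for all j. Then |P(⋂_{j=1}^s A_j^c) − q^s| ≤ s·2^{s-1}·α. -/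
open MeasureTheory ProbabilityTheory Finset

/-! Inclusion–exclusion writes `P(⋂ A_jᶜ)` as the alternating sum over `L` of `P(⋂_{j∈L} A_j)`,
and the binomial theorem writes `q^s = (1 - (1 - q))^s` as the same alternating sum with
`P(⋂_{j∈L} A_j)` replaced by `(1 - q)^|L|`. The two sums differ termwise by at most `|L| α`,
and `∑_L |L| = s 2^(s-1)`. -/

theorem measureReal_biInter_compl_eq_sum_powerset {Ω ι : Type*} [MeasurableSpace Ω]
    {μ : Measure Ω} [IsFiniteMeasure μ] {t : Finset ι} {s : ι → Set Ω}
    (hs : ∀ i ∈ t, MeasurableSet (s i)) :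
    μ.real (⋂ i ∈ t, (s i)ᶜ) = ∑ u ∈ t.powerset, (-1 : ℝ) ^ #u * μ.real (⋂ i ∈ u, s i) := by
  have hempty : t.powerset.filter (fun u => ¬ u.Nonempty) = {∅} := by
    ext u
    simp only [mem_filter, mem_powerset, not_nonempty_iff_eq_empty, mem_singleton,
      and_iff_right_iff_imp]
    rintro rfl
    exact empty_subset t
  rw [← Set.compl_iUnion₂, measureReal_compl (t.measurableSet_biUnion hs),
    measureReal_biUnion_eq_sum_powerset hs,
    ← sum_filter_add_sum_filter_not t.powerset (·.Nonempty), hempty, sum_singleton]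
  simp [pow_succ, sub_eq_add_neg, ← sum_neg_distrib, add_comm]

theorem sum_powerset_card {ι : Type*} (t : Finset ι) :
    ∑ u ∈ t.powerset, #u = #t * 2 ^ (#t - 1) := by
  rw [sum_powerset_apply_card (fun m => m), ← Nat.sum_range_mul_choose]
  simp [mul_comm]

theorem sum_powerset_neg_one_pow_mul_pow {ι R : Type*} [CommRing R] (t : Finset ι) (p : R) :
    ∑ u ∈ t.powerset, (-1) ^ #u * p ^ #u = (1 - p) ^ #t := by
  rw [sub_eq_neg_add, ← sum_pow_mul_eq_add_pow]
  exact sum_congr rfl fun u _ => by rw [neg_pow p, one_pow, mul_one]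

theorem abs_sum_powerset_neg_one_pow_mul_sub_le {ι : Type*} (t : Finset ι) (f g : Finset ι → ℝ)
    (α : ℝ) (hfg : ∀ u ⊆ t, |f u - g u| ≤ #u * α) :
    |∑ u ∈ t.powerset, (-1) ^ #u * f u - ∑ u ∈ t.powerset, (-1) ^ #u * g u|
      ≤ #t * 2 ^ (#t - 1) * α := by
  calc |∑ u ∈ t.powerset, (-1) ^ #u * f u - ∑ u ∈ t.powerset, (-1) ^ #u * g u|
      = |∑ u ∈ t.powerset, (-1) ^ #u * (f u - g u)| := by
        simp only [mul_sub, sum_sub_distrib]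
    _ ≤ ∑ u ∈ t.powerset, |f u - g u| :=
        (abs_sum_le_sum_abs _ _).trans_eq (by simp only [abs_mul, abs_pow, abs_neg, abs_one,
          one_pow, one_mul])
    _ ≤ ∑ u ∈ t.powerset, (#u : ℝ) * α := sum_le_sum fun u hu => hfg u (mem_powerset.mp hu)
    _ = #t * 2 ^ (#t - 1) * α := by
        rw [← sum_mul]
        exact_mod_cast congrArg (fun n : ℕ => (n : ℝ) * α) (sum_powerset_card t)

/-- Approximate independence of block events: if `P(A_j) = 1 − q` for all `j` and every
sub-collection satisfies `|P(⋂_{j∈L} A_j) − ∏_{j∈L} P(A_j)| ≤ (|L|−1)α`, then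
`|P(⋂_j A_jᶜ) − q^s| ≤ s 2^{s−1} α`. -/
theorem stmt_16 {Ω : Type*} [MeasureSpace Ω] [IsProbabilityMeasure (ℙ : Measure Ω)]
    {s : ℕ} (A : Fin s → Set Ω) (hA : ∀ j, MeasurableSet (A j))
    (q α : ℝ) (hα : 0 ≤ α)
    (hq : ∀ j, (ℙ (A j)).toReal = 1 - q)
    (happrox : ∀ L : Finset (Fin s), L.Nonempty →
      |(ℙ (⋂ j ∈ L, A j)).toReal - ∏ j ∈ L, (ℙ (A j)).toReal|
        ≤ ((L.card : ℝ) - 1) * α) :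
    |(ℙ (⋂ j, (A j)ᶜ)).toReal - q ^ s| ≤ (s : ℝ) * 2 ^ (s - 1) * α := by
  simp only [← measureReal_def] at hq happrox ⊢
  have hterm : ∀ L ⊆ univ, |(ℙ : Measure Ω).real (⋂ j ∈ L, A j) - (1 - q) ^ #L| ≤ #L * α := by
    intro L _
    rcases L.eq_empty_or_nonempty with rfl | hL
    · simp
    · have h := happrox L hL
      rw [prod_congr rfl fun j _ => hq j, prod_const] at h
      linarith
  have hqs : q ^ s = ∑ L ∈ (univ : Finset (Fin s)).powerset, (-1) ^ #L * (1 - q) ^ #L := by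
    rw [sum_powerset_neg_one_pow_mul_pow, card_univ, Fintype.card_fin, sub_sub_cancel]
  rw [show ⋂ j, (A j)ᶜ = ⋂ j ∈ univ, (A j)ᶜ by simp,
    measureReal_biInter_compl_eq_sum_powerset fun j _ => hA j, hqs]
  simpa only [card_univ, Fintype.card_fin] using
    abs_sum_powerset_neg_one_pow_mul_sub_le univ _ _ α hterm
end
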